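/- arXiv:1311.0421 — 2 statements merged into one kernel-verified Lean document; each statement's English description precedes it below -/
import Mathlib

section
/- Suppose φ is a C³ function on [x_l, x_r] satisfying φ''' + F_0 φ'' + F_0'' φ = r, with F_0 a C² function and r continuous. If φ(x_l) = φ'(x_l) = 0 and φ''(x_l) = 1 and r = 0, then sup_{x ∈ [x_l, x_r]} |φ''(x)| ≤ exp( (1/2) ∫_{x_l}^{x_r} Q_2(y) dy ), where Q_2(x) = (1 + (x−x_l)^4/4) F_0''(x) − 2F_0(x) when F_0''(x) − 2F_0(x) > 0, and Q_2(x) = ((x−x_l)^4/4) F_0''(x) otherwise, assuming F_0'' ≥ 0 and F_0 ≥ 0 on [x_l, x_r]. -/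
open Set intervalIntegral

/-! Let `E = (φ'')²`. The equation gives `E' = -2 F₀ E - 2 F₀'' φ φ''`. At a point `x` where `E`
attains its maximum over `[x_l, x]`, the initial data `φ(x_l) = φ'(x_l) = 0` and Taylor's formula
give `φ(x)² ≤ (x - x_l)⁴/4 · E(x)`, so `2 |φ φ''| ≤ φ² + φ''²` yields `E'(x) ≤ Q₂(x) E(x)`.
Since `E` can first touch an increasing barrier only at such a running maximum, comparing `E`
with `(1 + ε) exp (∫ Q₂ + ε (x - x_l))` and letting `ε → 0` gives `E(x) ≤ exp (∫_{x_l}^x Q₂)`;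
finally `Q₂ ≥ 0` lets the upper limit grow to `x_r`. -/

open Filter Topology Real

theorem image_le_of_deriv_lt_deriv_boundary_of_le_before {f f' B B' : ℝ → ℝ} {a b : ℝ}
    (hf : ∀ x, HasDerivAt f (f' x) x) (hB : ∀ x, HasDerivAt B (B' x) x) (ha : f a ≤ B a)
    (bound : ∀ x ∈ Ico a b, (∀ t ∈ Icc a x, f t ≤ B t) → f x = B x → f' x < B' x) :
    ∀ ⦃x⦄, x ∈ Icc a b → f x ≤ B x := by
  have hf_cont : Continuous f := continuous_iff_continuousAt.2 fun x => (hf x).continuousAt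
  have hB_cont : Continuous B := continuous_iff_continuousAt.2 fun x => (hB x).continuousAt
  refine ((isClosed_le hf_cont hB_cont).inter isClosed_Icc)
    |>.Icc_subset_of_forall_mem_nhdsGT_of_Icc_subset ha fun x hx hle => ?_
  have hfx : f x ≤ B x := hle ⟨hx.1, le_rfl⟩
  rcases hfx.lt_or_eq with hlt | heq
  · exact mem_nhdsWithin_of_mem_nhds <|
      mem_of_superset ((isOpen_lt hf_cont hB_cont).mem_nhds hlt)
        (ofPred_subset_ofPred.2 fun _ => le_of_lt)
  · have hslope : ∀ᶠ z in 𝓝[>] x, 0 < slope (fun y => B y - f y) x z :=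
      (hasDerivWithinAt_iff_tendsto_slope' (lt_irrefl x)).1 ((hB x).sub (hf x)).hasDerivWithinAt
        (Ioi_mem_nhds (sub_pos.2 (bound x hx hle heq)))
    filter_upwards [hslope, self_mem_nhdsWithin] with z hz hxz
    rw [slope_def_field, heq, sub_self, sub_zero] at hz
    exact sub_nonneg.1 (div_pos_iff_of_pos_right (sub_pos.2 hxz) |>.1 hz).le

theorem integral_mono_right_of_nonneg {Q : ℝ → ℝ} {a x y : ℝ} (hQ : Continuous Q)
    (hxy : x ≤ y) (hQ0 : ∀ t ∈ Icc x y, 0 ≤ Q t) :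
    ∫ t in a..x, Q t ≤ ∫ t in a..y, Q t := by
  rw [← integral_add_adjacent_intervals (hQ.intervalIntegrable a x) (hQ.intervalIntegrable x y)]
  exact le_add_of_nonneg_right (integral_nonneg hxy hQ0)

theorem le_mul_exp_integral_add_of_deriv_le_at_running_max {f f' Q : ℝ → ℝ} {a b ε : ℝ}
    (hf : ∀ x, HasDerivAt f (f' x) x) (hQ : Continuous Q) (hQ0 : ∀ x ∈ Icc a b, 0 ≤ Q x)
    (hfa : 0 ≤ f a) (hε : 0 < ε)
    (hmax : ∀ x ∈ Ico a b, (∀ t ∈ Icc a x, f t ≤ f x) → f' x ≤ Q x * f x) :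
    ∀ x ∈ Icc a b, f x ≤ (f a + ε) * exp ((∫ t in a..x, Q t) + ε * (x - a)) := by
  set g : ℝ → ℝ := fun x => (f a + ε) * exp ((∫ t in a..x, Q t) + ε * (x - a))
  have hg_pos : ∀ x, 0 < g x := fun x => by positivity
  have hg : ∀ x, HasDerivAt g ((Q x + ε) * g x) x := fun x => by
    have hexponent : HasDerivAt (fun x => (∫ t in a..x, Q t) + ε * (x - a)) (Q x + ε) x := by
      simpa using (hQ.integral_hasStrictDerivAt a x).hasDerivAt.fun_add
        (((hasDerivAt_id x).sub_const a).const_mul ε)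
    refine (hexponent.exp.const_mul (f a + ε)).congr_deriv ?_
    simp only [g]
    ring
  have hg_mono : MonotoneOn g (Icc a b) := fun x hx y hy hxy => by
    have := integral_mono_right_of_nonneg (a := a) hQ hxy
      fun t ht => hQ0 t ⟨hx.1.trans ht.1, ht.2.trans hy.2⟩
    unfold g
    gcongr
  refine image_le_of_deriv_lt_deriv_boundary_of_le_before hf hg (by simpa using hε.le) ?_
  intro x hx hle heq
  have hfx : ∀ t ∈ Icc a x, f t ≤ f x := fun t ht => by
    rw [heq]
    exact (hle t ht).trans (hg_mono ⟨ht.1, ht.2.trans hx.2.le⟩ (Ico_subset_Icc_self hx) ht.2)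
  calc f' x ≤ Q x * f x := hmax x hx hfx
    _ = Q x * g x := by rw [heq]
    _ < (Q x + ε) * g x := by gcongr; linarith [hg_pos x]

theorem le_mul_exp_integral_of_deriv_le_at_running_max {f f' Q : ℝ → ℝ} {a b : ℝ}
    (hf : ∀ x, HasDerivAt f (f' x) x) (hQ : Continuous Q) (hQ0 : ∀ x ∈ Icc a b, 0 ≤ Q x)
    (hfa : 0 ≤ f a)
    (hmax : ∀ x ∈ Ico a b, (∀ t ∈ Icc a x, f t ≤ f x) → f' x ≤ Q x * f x) :
    ∀ x ∈ Icc a b, f x ≤ f a * exp (∫ t in a..x, Q t) := by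
  intro x hx
  have hlim : Tendsto (fun ε => (f a + ε) * exp ((∫ t in a..x, Q t) + ε * (x - a))) (𝓝[>] 0)
      (𝓝 (f a * exp (∫ t in a..x, Q t))) := by
    have : Continuous fun ε => (f a + ε) * exp ((∫ t in a..x, Q t) + ε * (x - a)) := by fun_prop
    simpa using this.continuousWithinAt (s := Ioi 0) (x := 0) |>.tendsto
  exact ge_of_tendsto hlim <| eventually_nhdsWithin_of_forall fun ε hε =>
    le_mul_exp_integral_add_of_deriv_le_at_running_max hf hQ hQ0 hfa hε hmax x hx

theorem abs_le_of_abs_deriv_deriv_le {f f' f'' : ℝ → ℝ} {a b M : ℝ}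
    (hf : ∀ x, HasDerivAt f (f' x) x) (hf' : ∀ x, HasDerivAt f' (f'' x) x)
    (h0 : f a = 0) (h1 : f' a = 0) (hab : a ≤ b) (hM : ∀ x ∈ Icc a b, |f'' x| ≤ M) :
    |f b| ≤ M * (b - a) ^ 2 / 2 := by
  have hderiv : ∀ x ∈ Icc a b, ‖f' x‖ ≤ M * (x - a) :=
    image_norm_le_of_norm_deriv_right_le_deriv_boundary
      (fun x _ => (hf' x).continuousAt.continuousWithinAt)
      (fun x _ => (hf' x).hasDerivWithinAt) (by simp [h1])
      (fun x => by simpa using ((hasDerivAt_id x).sub_const a).const_mul M)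
      (fun x hx => hM x (Ico_subset_Icc_self hx))
  exact image_norm_le_of_norm_deriv_right_le_deriv_boundary
    (fun x _ => (hf x).continuousAt.continuousWithinAt)
    (fun x _ => (hf x).hasDerivWithinAt) (by simp [h0])
    (fun x => ((((hasDerivAt_id' x).sub_const a).fun_pow 2).const_mul M).div_const 2
      |>.congr_deriv (by ring))
    (fun x hx => hderiv x (Ico_subset_Icc_self hx)) ⟨hab, le_rfl⟩

/-- The weight `Q₂` of the statement, its two cases merged by `max`. -/
noncomputable def energyWeight (F G : ℝ → ℝ) (a y : ℝ) : ℝ :=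
  (y - a) ^ 4 / 4 * G y + max (G y - 2 * F y) 0

theorem ite_eq_energyWeight (F G : ℝ → ℝ) (a y : ℝ) :
    (if G y - 2 * F y > 0 then (1 + (y - a) ^ 4 / 4) * G y - 2 * F y
      else ((y - a) ^ 4 / 4) * G y) = energyWeight F G a y := by
  unfold energyWeight
  split_ifs with h
  · rw [max_eq_left h.le]; ring
  · rw [max_eq_right (not_lt.1 h)]; ring

theorem continuous_energyWeight {F G : ℝ → ℝ} (hF : Continuous F) (hG : Continuous G) (a : ℝ) :
    Continuous (energyWeight F G a) := by
  unfold energyWeight; fun_prop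

theorem energyWeight_nonneg {F G : ℝ → ℝ} {a y : ℝ} (hG : 0 ≤ G y) : 0 ≤ energyWeight F G a y :=
  add_nonneg (by positivity) (le_max_right _ _)

theorem two_mul_mul_le_energyWeight_mul {F G : ℝ → ℝ} {a x u u'' u''' : ℝ}
    (hode : u''' + F x * u'' + G x * u = 0) (hG : 0 ≤ G x)
    (hu : u ^ 2 ≤ (x - a) ^ 4 / 4 * u'' ^ 2) :
    2 * u'' * u''' ≤ energyWeight F G a x * u'' ^ 2 := by
  calc 2 * u'' * u''' = -2 * F x * u'' ^ 2 - 2 * G x * u * u'' := by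
        rw [show u''' = -(F x * u'') - G x * u by linarith]; ring
    _ ≤ -2 * F x * u'' ^ 2 + G x * ((x - a) ^ 4 / 4 * u'' ^ 2 + u'' ^ 2) := by
        linarith [mul_nonneg hG (sq_nonneg (u + u'')), mul_le_mul_of_nonneg_left hu hG]
    _ = ((x - a) ^ 4 / 4 * G x + (G x - 2 * F x)) * u'' ^ 2 := by ring
    _ ≤ energyWeight F G a x * u'' ^ 2 := by
        unfold energyWeight; gcongr; exact le_max_left _ _

theorem sq_le_mul_exp_integral_energyWeight {u u' u'' u''' F G : ℝ → ℝ} {a b : ℝ}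
    (hu : ∀ x, HasDerivAt u (u' x) x) (hu' : ∀ x, HasDerivAt u' (u'' x) x)
    (hu'' : ∀ x, HasDerivAt u'' (u''' x) x) (hF : Continuous F) (hG : Continuous G)
    (hG0 : ∀ x ∈ Icc a b, 0 ≤ G x)
    (hode : ∀ x ∈ Icc a b, u''' x + F x * u'' x + G x * u x = 0) (h0 : u a = 0) (h1 : u' a = 0) :
    ∀ x ∈ Icc a b, u'' x ^ 2 ≤ u'' a ^ 2 * exp (∫ t in a..x, energyWeight F G a t) := by
  refine le_mul_exp_integral_of_deriv_le_at_running_max (f' := fun x => 2 * u'' x * u''' x)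
    (fun x => by simpa using (hu'' x).fun_pow 2) (continuous_energyWeight hF hG a)
    (fun x hx => energyWeight_nonneg (hG0 x hx)) (sq_nonneg _) fun x hx hmax => ?_
  have hx' : x ∈ Icc a b := Ico_subset_Icc_self hx
  have htaylor : |u x| ≤ |u'' x| * (x - a) ^ 2 / 2 :=
    abs_le_of_abs_deriv_deriv_le hu hu' h0 h1 hx.1 fun t ht => sq_le_sq.1 (hmax t ht)
  refine two_mul_mul_le_energyWeight_mul (hode x hx') (hG0 x hx') ?_
  calc u x ^ 2 = |u x| ^ 2 := (sq_abs _).symm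
    _ ≤ (|u'' x| * (x - a) ^ 2 / 2) ^ 2 := by gcongr
    _ = (x - a) ^ 4 / 4 * u'' x ^ 2 := by rw [div_pow, mul_pow, sq_abs]; ring

theorem ContDiff.hasDerivAt_iterate_deriv {f : ℝ → ℝ} {n k : ℕ} (hf : ContDiff ℝ n f) (hk : k < n)
    (x : ℝ) : HasDerivAt (deriv^[k] f) (deriv^[k + 1] f x) x := by
  have : ContDiff ℝ (1 + k : ℕ) f := hf.of_le (by exact_mod_cast (by omega : 1 + k ≤ n))
  rw [Function.iterate_succ_apply']
  exact ((this.iterate_deriv' 1 k).differentiable one_ne_zero x).hasDerivAt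

theorem ContDiff.continuous_iterate_deriv {f : ℝ → ℝ} {n k : ℕ} (hf : ContDiff ℝ n f)
    (hk : k ≤ n) : Continuous (deriv^[k] f) :=
  ((hf.of_le (by exact_mod_cast (by omega : 0 + k ≤ n))).iterate_deriv' 0 k).continuous

theorem stmt_4_general (xl xr : ℝ) (φ F₀ : ℝ → ℝ)
    (hφ : ContDiff ℝ 3 φ) (hF₀ : ContDiff ℝ 2 F₀)
    (hF₀''pos : ∀ x ∈ Icc xl xr, 0 ≤ deriv^[2] F₀ x)
    (hODE : ∀ x ∈ Icc xl xr,
      deriv^[3] φ x + F₀ x * deriv^[2] φ x + deriv^[2] F₀ x * φ x = 0)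
    (h0 : φ xl = 0) (h1 : deriv φ xl = 0) (h2 : deriv^[2] φ xl = 1) :
    ∀ x ∈ Icc xl xr,
      |deriv^[2] φ x| ≤
        Real.exp ((1 / 2) * ∫ y in xl..xr,
          if deriv^[2] F₀ y - 2 * F₀ y > 0 then
            (1 + (y - xl) ^ 4 / 4) * deriv^[2] F₀ y - 2 * F₀ y
          else ((y - xl) ^ 4 / 4) * deriv^[2] F₀ y) := by
  intro x hx
  have hF₀'' : Continuous (deriv^[2] F₀) := hF₀.continuous_iterate_deriv le_rfl
  have hQ := continuous_energyWeight hF₀.continuous hF₀'' xl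
  rw [integral_congr fun y _ => ite_eq_energyWeight F₀ (deriv^[2] F₀) xl y]
  refine abs_le_of_sq_le_sq ?_ (exp_pos _).le
  calc deriv^[2] φ x ^ 2 ≤ exp (∫ t in xl..x, energyWeight F₀ (deriv^[2] F₀) xl t) := by
        simpa [h2] using sq_le_mul_exp_integral_energyWeight
          (hφ.hasDerivAt_iterate_deriv (by norm_num)) (hφ.hasDerivAt_iterate_deriv (by norm_num))
          (hφ.hasDerivAt_iterate_deriv (by norm_num)) hF₀.continuous hF₀'' hF₀''pos hODE
          h0 h1 x hx
    _ ≤ exp (∫ t in xl..xr, energyWeight F₀ (deriv^[2] F₀) xl t) :=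
      exp_le_exp.2 <| integral_mono_right_of_nonneg hQ hx.2
        fun t ht => energyWeight_nonneg (hF₀''pos t ⟨hx.1.trans ht.1, ht.2⟩)
    _ = exp (1 / 2 * ∫ t in xl..xr, energyWeight F₀ (deriv^[2] F₀) xl t) ^ 2 := by
        rw [← exp_nat_mul]; congr 1; push_cast; ring

/-- Energy bound for the homogeneous problem with data `φ(x_l)=φ'(x_l)=0`, `φ''(x_l)=1`:
`sup |φ''| ≤ exp((1/2)∫ Q₂)`. -/
theorem stmt_4 (xl xr : ℝ) (hx : xl ≤ xr) (φ F₀ : ℝ → ℝ)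
    (hφ : ContDiff ℝ 3 φ) (hF₀ : ContDiff ℝ 2 F₀)
    (hF₀pos : ∀ x ∈ Icc xl xr, 0 ≤ F₀ x)
    (hF₀''pos : ∀ x ∈ Icc xl xr, 0 ≤ deriv^[2] F₀ x)
    (hODE : ∀ x ∈ Icc xl xr,
      deriv^[3] φ x + F₀ x * deriv^[2] φ x + deriv^[2] F₀ x * φ x = 0)
    (h0 : φ xl = 0) (h1 : deriv φ xl = 0) (h2 : deriv^[2] φ xl = 1) :
    ∀ x ∈ Icc xl xr,
      |deriv^[2] φ x| ≤
        Real.exp ((1 / 2) * ∫ y in xl..xr,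
          if deriv^[2] F₀ y - 2 * F₀ y > 0 then
            (1 + (y - xl) ^ 4 / 4) * deriv^[2] F₀ y - 2 * F₀ y
          else ((y - xl) ^ 4 / 4) * deriv^[2] F₀ y) :=
  stmt_4_general xl xr φ F₀ hφ hF₀ hF₀''pos hODE h0 h1 h2
end

section
/- For any a > 0 and b ∈ ℝ, the function F(x) = a x + b + sqrt(a/(2t(x))) q(t(x)) with t(x) = (a/2)(x + b/a)² satisfies F''' + F F'' = 0 on {x : x > −b/a} if and only if q satisfies q''' + (1 + q/(2t)) q'' + (−1/(2t) + 3/(4t²) − q/(4t²)) q' + (1/(2t²) − 3/(4t³)) q + q²/(4t³) = 0 on the corresponding t-domain. -/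
/-!
On `x > -b/a` put `u = x + b/a > 0`; then `t = a u²/2` and `√(a/(2t)) = 1/u`, so
`F(x) = G(u) := a u + q(a u²/2)/u`. Differentiating three times with `dt/du = a u` gives
`G''' + G G'' = a³u² · E[q](t)`, where `E[q]` is the left-hand side of the equation for `q`.
Since `u ↦ a u²/2` maps `(0, ∞)` onto `(0, ∞)`, one side vanishes identically iff the
other does.
-/

open Set

theorem ContDiffOn.hasDerivAt_iteratedDeriv {𝕜 F : Type*} [NontriviallyNormedField 𝕜]
    [NormedAddCommGroup F] [NormedSpace 𝕜 F] {f : 𝕜 → F} {s : Set 𝕜} {n : WithTop ℕ∞}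
    {m : ℕ} (hf : ContDiffOn 𝕜 n f s) (hs : IsOpen s) (hmn : m < n) {x : 𝕜} (hx : x ∈ s) :
    HasDerivAt (iteratedDeriv m f) (iteratedDeriv (m + 1) f x) x := by
  have hnhds : iteratedDerivWithin m f s =ᶠ[nhds x] iteratedDeriv m f :=
    Filter.eventuallyEq_of_mem (hs.mem_nhds hx) (iteratedDerivWithin_of_isOpen hs)
  rw [iteratedDeriv_succ]
  exact (((hf.differentiableOn_iteratedDerivWithin hmn hs.uniqueDiffOn).differentiableAt
    (hs.mem_nhds hx)).congr_of_eventuallyEq hnhds.symm).hasDerivAt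

theorem Set.EqOn.iteratedDeriv_succ_of_hasDerivAt {𝕜 F : Type*} [NontriviallyNormedField 𝕜]
    [NormedAddCommGroup F] [NormedSpace 𝕜 F] {f g g' : 𝕜 → F} {s : Set 𝕜} {n : ℕ}
    (hs : IsOpen s) (hfg : EqOn (iteratedDeriv n f) g s) (hg : ∀ x ∈ s, HasDerivAt g (g' x) x) :
    EqOn (iteratedDeriv (n + 1) f) g' s := fun x hx => by
  rw [_root_.iteratedDeriv_succ, hfg.deriv hs hx]
  exact (hg x hx).deriv

noncomputable def blasiusOp (F : ℝ → ℝ) (x : ℝ) : ℝ :=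
  iteratedDeriv 3 F x + F x * iteratedDeriv 2 F x

noncomputable def farFieldOp (q : ℝ → ℝ) (s : ℝ) : ℝ :=
  iteratedDeriv 3 q s + (1 + q s / (2 * s)) * iteratedDeriv 2 q s +
    (-1 / (2 * s) + 3 / (4 * s ^ 2) - q s / (4 * s ^ 2)) * deriv q s +
    (1 / (2 * s ^ 2) - 3 / (4 * s ^ 3)) * q s + (q s) ^ 2 / (4 * s ^ 3)

theorem blasiusOp_congr {F G : ℝ → ℝ} {s : Set ℝ} (hs : IsOpen s) (hFG : EqOn F G s)
    {x : ℝ} (hx : x ∈ s) : blasiusOp F x = blasiusOp G x := by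
  simp only [blasiusOp, hFG.iteratedDeriv_of_isOpen hs _ hx, hFG hx]

theorem blasiusOp_comp_add_const (G : ℝ → ℝ) (c x : ℝ) :
    blasiusOp (fun y => G (y + c)) x = blasiusOp G (x + c) := by
  simp only [blasiusOp, iteratedDeriv_comp_add_const]

noncomputable def farFieldProfile (a : ℝ) (q : ℝ → ℝ) (u : ℝ) : ℝ :=
  a * u + q (a / 2 * u ^ 2) / u

section FarFieldProfile

variable {a : ℝ} {q : ℝ → ℝ}

theorem hasDerivAt_iteratedDeriv_comp_half_mul_sq {n k : ℕ} (ha : 0 < a)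
    (hq : ContDiffOn ℝ n q (Ioi 0)) (hk : k < n) {u : ℝ} (hu : 0 < u) :
    HasDerivAt (fun v => iteratedDeriv k q (a / 2 * v ^ 2))
      (iteratedDeriv (k + 1) q (a / 2 * u ^ 2) * (a * u)) u := by
  have ht : HasDerivAt (fun v : ℝ => a / 2 * v ^ 2) (a * u) u := by
    simpa using ((hasDerivAt_pow 2 u).const_mul (a / 2)).congr_deriv (by ring)
  exact (hq.hasDerivAt_iteratedDeriv isOpen_Ioi (by exact_mod_cast hk)
    (by positivity : (0 : ℝ) < a / 2 * u ^ 2)).comp u ht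

theorem blasiusOp_farFieldProfile (ha : 0 < a) (hq : ContDiffOn ℝ 3 q (Ioi 0)) {u : ℝ}
    (hu : 0 < u) :
    blasiusOp (farFieldProfile a q) u = a ^ 3 * u ^ 2 * farFieldOp q (a / 2 * u ^ 2) := by
  set Q : ℕ → ℝ → ℝ := fun k v => iteratedDeriv k q (a / 2 * v ^ 2)
  have hQ (k : ℕ) (hk : k < 3) {v : ℝ} (hv : v ∈ Ioi 0) :
      HasDerivAt (Q k) (Q (k + 1) v * (a * v)) v :=
    hasDerivAt_iteratedDeriv_comp_half_mul_sq ha hq hk hv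
  have h1 : EqOn (iteratedDeriv 1 (farFieldProfile a q))
      (fun v => a + a * Q 1 v - Q 0 v / v ^ 2) (Ioi 0) := by
    refine (Set.eqOn_refl _ _).iteratedDeriv_succ_of_hasDerivAt (n := 0) isOpen_Ioi
      fun v hv => ?_
    have hv0 : v ≠ 0 := ne_of_gt hv
    have hderiv := ((hasDerivAt_id v).const_mul a).add
      ((hQ 0 (by norm_num) hv).div (hasDerivAt_id v) hv0)
    convert hderiv using 1
    · ext w
      simp only [iteratedDeriv_zero, farFieldProfile, id_eq, Pi.add_apply, Pi.div_apply, Q]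
    · simp only [id, zero_add]
      field_simp
      ring
  have h2 : EqOn (iteratedDeriv 2 (farFieldProfile a q))
      (fun v => a ^ 2 * v * Q 2 v + 2 * Q 0 v / v ^ 3 - a * Q 1 v / v) (Ioi 0) := by
    refine h1.iteratedDeriv_succ_of_hasDerivAt isOpen_Ioi fun v hv => ?_
    have hv0 : v ≠ 0 := ne_of_gt hv
    have hderiv := ((hasDerivAt_const v a).add ((hQ 1 (by norm_num) hv).const_mul a)).sub
      ((hQ 0 (by norm_num) hv).div (hasDerivAt_pow 2 v) (pow_ne_zero 2 hv0))
    refine hderiv.congr_deriv ?_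
    simp only [Nat.reduceAdd, Nat.reduceSub, Nat.cast_ofNat]
    field_simp
    ring
  have h3 : EqOn (iteratedDeriv 3 (farFieldProfile a q))
      (fun v => a ^ 3 * v ^ 2 * Q 3 v + 3 * a * Q 1 v / v ^ 2 - 6 * Q 0 v / v ^ 4) (Ioi 0) := by
    refine h2.iteratedDeriv_succ_of_hasDerivAt isOpen_Ioi fun v hv => ?_
    have hv0 : v ≠ 0 := ne_of_gt hv
    have hderiv := ((((hasDerivAt_id v).const_mul (a ^ 2)).mul (hQ 2 (by norm_num) hv)).add
      (((hQ 0 (by norm_num) hv).const_mul 2).div (hasDerivAt_pow 3 v) (pow_ne_zero 3 hv0))).sub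
      (((hQ 1 (by norm_num) hv).const_mul a).div (hasDerivAt_id v) hv0)
    refine hderiv.congr_deriv ?_
    simp only [id, Nat.reduceAdd, Nat.reduceSub, Nat.cast_ofNat]
    field_simp
    ring
  have ha0 : a ≠ 0 := ne_of_gt ha
  have hu0 : u ≠ 0 := ne_of_gt hu
  rw [blasiusOp, h3 hu, h2 hu]
  simp only [farFieldOp, farFieldProfile, Q, iteratedDeriv_zero, iteratedDeriv_one]
  field_simp
  ring

theorem blasiusOp_farFieldProfile_eq_zero_iff (ha : 0 < a) (hq : ContDiffOn ℝ 3 q (Ioi 0)) :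
    (∀ u > 0, blasiusOp (farFieldProfile a q) u = 0) ↔ ∀ s > 0, farFieldOp q s = 0 := by
  constructor
  · intro h s hs
    have hu : 0 < √(2 * s / a) := Real.sqrt_pos.mpr (by positivity)
    have hsq : a / 2 * √(2 * s / a) ^ 2 = s := by
      rw [Real.sq_sqrt (by positivity)]
      field_simp
    have hzero := h _ hu
    rw [blasiusOp_farFieldProfile ha hq hu, hsq] at hzero
    exact (mul_eq_zero.mp hzero).resolve_left (by positivity)
  · intro h u hu
    rw [blasiusOp_farFieldProfile ha hq hu, h _ (by positivity), mul_zero]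

end FarFieldProfile

/-- The change of variables `t = (a/2)(x+b/a)²`, `F = ax + b + √(a/(2t)) q(t)` turns the
Blasius equation on `{x > -b/a}` into the far-field equation (14.2) for `q` on `t > 0`. -/
theorem stmt_10 (a b : ℝ) (ha : 0 < a) (q : ℝ → ℝ)
    (hq : ContDiffOn ℝ 3 q (Ioi 0)) (F t : ℝ → ℝ)
    (ht : ∀ x, t x = a / 2 * (x + b / a) ^ 2)
    (hF : ∀ x, F x = a * x + b + Real.sqrt (a / (2 * t x)) * q (t x)) :
    (∀ x > -b / a, deriv^[3] F x + F x * deriv^[2] F x = 0) ↔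
    (∀ s > (0 : ℝ),
      deriv^[3] q s + (1 + q s / (2 * s)) * deriv^[2] q s +
        (-1 / (2 * s) + 3 / (4 * s ^ 2) - q s / (4 * s ^ 2)) * deriv q s +
        (1 / (2 * s ^ 2) - 3 / (4 * s ^ 3)) * q s + (q s) ^ 2 / (4 * s ^ 3) = 0) := by
  have hFeq : EqOn F (fun x => farFieldProfile a q (x + b / a)) (Ioi (-b / a)) := by
    intro x hx
    have hu : 0 < x + b / a := neg_lt_iff_pos_add.mp (by rwa [neg_div] at hx)
    have hsqrt : √(a / (2 * t x)) = (x + b / a)⁻¹ := by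
      rw [ht, show a / (2 * (a / 2 * (x + b / a) ^ 2)) = (x + b / a)⁻¹ ^ 2 by field_simp,
        Real.sqrt_sq (inv_nonneg.mpr hu.le)]
    change F x = farFieldProfile a q (x + b / a)
    rw [hF, hsqrt, farFieldProfile, ← ht]
    field_simp
  have hblasius : ∀ x > -b / a, deriv^[3] F x + F x * deriv^[2] F x =
      blasiusOp (farFieldProfile a q) (x + b / a) := fun x hx => by
    rw [← blasiusOp_comp_add_const, ← blasiusOp_congr isOpen_Ioi hFeq hx, blasiusOp,
      iteratedDeriv_eq_iterate, iteratedDeriv_eq_iterate]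
  have hshift : (∀ x > -b / a, blasiusOp (farFieldProfile a q) (x + b / a) = 0) ↔
      ∀ u > 0, blasiusOp (farFieldProfile a q) u = 0 :=
    ⟨fun h u hu => by simpa using h (u - b / a) (by linarith [neg_div a b]),
      fun h x hx => h _ (by linarith [neg_div a b])⟩
  rw [forall₂_congr fun x hx => by rw [hblasius x hx], hshift,
    blasiusOp_farFieldProfile_eq_zero_iff ha hq]
  simp only [farFieldOp, iteratedDeriv_eq_iterate]
end
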